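/- Let p be a prime, n a positive integer, and q an integer coprime to p. For every natural number x, the set O^n(x) = { w ∈ ZMod (p^n) : ∃ y ∈ ℕ, y ≡ x (mod p^n) and w ≡ q^y (mod p^n) } equals { q^{x + b p^n} mod p^n : b ∈ {0, 1, ..., p-2} }. -/

import Mathlib

/-!
Since `q` is a unit modulo `p ^ n`, Euler's theorem gives `q ^ (p ^ n * (p - 1)) = 1`, because
`φ (p ^ n)` divides `φ (p ^ (n + 1)) = p ^ n * (p - 1)`. So `q ^ y` depends only on `y` modulo
`p ^ n * (p - 1)`, and modulo that number the exponents `y ≡ x [MOD p ^ n]` are exactly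
`x + b * p ^ n` with `b < p - 1`.
-/

/-- The set of out-neighbors of `x` in the exponentiation graph modulo `p^n`:
residues modulo `p^n` of `q^y` over all natural numbers `y ≡ x (mod p^n)`. -/
def outNbrs (p n : ℕ) (q : ℤ) (x : ℕ) : Set (ZMod (p ^ n)) :=
  {w | ∃ y : ℕ, (y : ZMod (p ^ n)) = (x : ZMod (p ^ n)) ∧ (q : ZMod (p ^ n)) ^ y = w}

theorem Nat.exists_lt_modEq_add_mul {x y N K : ℕ} (hK : 0 < K) (h : y ≡ x [MOD N]) :
    ∃ b < K, x + b * N ≡ y [MOD N * K] := by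
  obtain ⟨t, ht⟩ := Nat.modEq_iff_dvd.mp h.symm
  have hK' : (0 : ℤ) < K := by exact_mod_cast hK
  have hlt := Int.emod_lt_of_pos t hK'
  refine ⟨(t % K).toNat, by omega, Nat.modEq_iff_dvd.mpr ⟨t / K, ?_⟩⟩
  rw [Int.natCast_add, Int.natCast_mul, Int.toNat_of_nonneg (Int.emod_nonneg t hK'.ne'),
    Int.emod_def]
  push_cast
  linear_combination ht

theorem setOf_pow_modEq_eq {G : Type*} [Monoid G] {a : G} {N K : ℕ} (ha : a ^ (N * K) = 1)
    (hK : 0 < K) (x : ℕ) :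
    {w | ∃ y, y ≡ x [MOD N] ∧ a ^ y = w} = {w | ∃ b < K, w = a ^ (x + b * N)} := by
  ext w
  constructor
  · rintro ⟨y, hy, rfl⟩
    obtain ⟨b, hb, hby⟩ := Nat.exists_lt_modEq_add_mul hK hy
    exact ⟨b, hb, pow_eq_pow_of_modEq hby.symm ha⟩
  · rintro ⟨b, -, rfl⟩
    exact ⟨x + b * N, by simp [Nat.ModEq, Nat.add_mul_mod_self_right], rfl⟩

theorem ZMod.intCast_pow_totient {m : ℕ} {q : ℤ} (hq : IsCoprime q m) :
    (q : ZMod m) ^ m.totient = 1 := by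
  rw [← ZMod.coe_unitOfIsCoprime q hq, ← Units.val_pow_eq_pow_val, ZMod.pow_totient, Units.val_one]

theorem ZMod.intCast_pow_prime_pow_mul_pred {p : ℕ} (hp : p.Prime) (n : ℕ) {q : ℤ}
    (hq : IsCoprime q p) : (q : ZMod (p ^ n)) ^ (p ^ n * (p - 1)) = 1 := by
  have hqn : IsCoprime q ((p ^ n : ℕ) : ℤ) := by push_cast; exact hq.pow_right
  have hdvd : (p ^ n).totient ∣ p ^ n * (p - 1) :=
    Nat.totient_prime_pow_succ hp n ▸ Nat.totient_dvd_of_dvd (pow_dvd_pow p n.le_succ)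
  obtain ⟨k, hk⟩ := hdvd
  rw [hk, pow_mul, ZMod.intCast_pow_totient hqn, one_pow]

theorem outNbrs_eq_image_general (p n : ℕ) (q : ℤ) (hp : p.Prime)
    (hq : IsCoprime q (p : ℤ)) (x : ℕ) :
    outNbrs p n q x =
      {w | ∃ b : ℕ, b ≤ p - 2 ∧ w = (q : ZMod (p ^ n)) ^ (x + b * p ^ n)} := by
  have hp2 := hp.two_le
  simp_rw [outNbrs, ZMod.natCast_eq_natCast_iff]
  rw [setOf_pow_modEq_eq (ZMod.intCast_pow_prime_pow_mul_pred hp n hq) (by omega)]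
  ext w
  exact exists_congr fun b => and_congr_left fun _ => by omega

theorem outNbrs_eq_image (p n : ℕ) (q : ℤ) (hp : p.Prime) (hn : 0 < n)
    (hq : IsCoprime q (p : ℤ)) (x : ℕ) :
    outNbrs p n q x =
      {w | ∃ b : ℕ, b ≤ p - 2 ∧ w = (q : ZMod (p ^ n)) ^ (x + b * p ^ n)} :=
  outNbrs_eq_image_general p n q hp hq x
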